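/- If a Banach space X is wuacs, then X does not contain an asymptotically isometric copy of ℓ¹. -/

import Mathlib

open Filter Topology

/-- A real Banach space is wuacs if for any sequences (xₙ), (yₙ) in the unit sphere and every
norm-one functional x*, ‖xₙ+yₙ‖ → 2 and x*(xₙ) → 1 imply x*(yₙ) → 1. -/
def IsWuacs (Y : Type*) [NormedAddCommGroup Y] [NormedSpace ℝ Y] : Prop :=
  ∀ (yn zn : ℕ → Y) (f : StrongDual ℝ Y),
    (∀ n, ‖yn n‖ = 1) → (∀ n, ‖zn n‖ = 1) → ‖f‖ = 1 →
    Tendsto (fun n => ‖yn n + zn n‖) atTop (𝓝 2) →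
    Tendsto (fun n => f (yn n)) atTop (𝓝 1) →
    Tendsto (fun n => f (zn n)) atTop (𝓝 1)

/-- X contains an asymptotically isometric copy of ℓ¹. -/
def ContainsAsympIsomL1 (X : Type*) [NormedAddCommGroup X] [NormedSpace ℝ X] : Prop :=
  ∃ (x : ℕ → X) (ε : ℕ → ℝ), (∀ n, ‖x n‖ ≤ 1) ∧ Antitone ε ∧
    (∀ n, ε n ∈ Set.Ico (0 : ℝ) 1) ∧ Tendsto ε atTop (𝓝 0) ∧
    ∀ (m : ℕ) (a : ℕ → ℝ),
      (∑ i ∈ Finset.range m, (1 - ε i) * |a i|) ≤ ‖∑ i ∈ Finset.range m, a i • x i‖ ∧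
      ‖∑ i ∈ Finset.range m, a i • x i‖ ≤ ∑ i ∈ Finset.range m, |a i|

private theorem aux_wuacs_no_aiL1 (X : Type*) [NormedAddCommGroup X] [NormedSpace ℝ X]
    [CompleteSpace X]
    (h : ∀ (yn zn : ℕ → X) (f : StrongDual ℝ X),
    (∀ n, ‖yn n‖ = 1) → (∀ n, ‖zn n‖ = 1) → ‖f‖ = 1 →
    Tendsto (fun n => ‖yn n + zn n‖) atTop (𝓝 2) →
    Tendsto (fun n => f (yn n)) atTop (𝓝 1) →
    Tendsto (fun n => f (zn n)) atTop (𝓝 1)) :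
    ¬ (∃ (x : ℕ → X) (ε : ℕ → ℝ), (∀ n, ‖x n‖ ≤ 1) ∧ Antitone ε ∧
    (∀ n, ε n ∈ Set.Ico (0 : ℝ) 1) ∧ Tendsto ε atTop (𝓝 0) ∧
    ∀ (m : ℕ) (a : ℕ → ℝ),
      (∑ i ∈ Finset.range m, (1 - ε i) * |a i|) ≤ ‖∑ i ∈ Finset.range m, a i • x i‖ ∧
      ‖∑ i ∈ Finset.range m, a i • x i‖ ≤ ∑ i ∈ Finset.range m, |a i|) := by
  rintro ⟨x, ε, hx1, hmono, hε, hε0, hbd⟩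
  -- finsupp version of the lower bound
  have key : ∀ c : ℕ →₀ ℝ,
      ∑ i ∈ c.support, (1 - ε i) * |c i| ≤ ‖∑ i ∈ c.support, c i • x i‖ := by
    intro c
    obtain ⟨m, hm⟩ := c.support.exists_nat_subset_range
    have h1 : ∑ i ∈ c.support, (1 - ε i) * |c i| = ∑ i ∈ Finset.range m, (1 - ε i) * |c i| :=
      Finset.sum_subset hm (by intro i _ hi; simp [Finsupp.notMem_support_iff.mp hi])
    have h2 : ∑ i ∈ c.support, c i • x i = ∑ i ∈ Finset.range m, c i • x i :=
      Finset.sum_subset hm (by intro i _ hi; simp [Finsupp.notMem_support_iff.mp hi])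
    rw [h1, h2]; exact (hbd m c).1
  have hεlt : ∀ i, 0 < 1 - ε i := fun i => by linarith [(hε i).2]
  have hli : LinearIndependent ℝ x := by
    rw [linearIndependent_iff]
    intro c hc
    rw [Finsupp.linearCombination_apply, Finsupp.sum] at hc
    have hk := key c
    rw [hc, norm_zero] at hk
    ext i
    by_contra h0
    have hi : i ∈ c.support := Finsupp.mem_support_iff.mpr (by simpa using h0)
    have hpos : 0 < (1 - ε i) * |c i| :=
      mul_pos (hεlt i) (abs_pos.mpr (by simpa using h0))
    have hsp : 0 < ∑ i ∈ c.support, (1 - ε i) * |c i| :=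
      Finset.sum_pos' (fun j _ => mul_nonneg (le_of_lt (hεlt j)) (abs_nonneg _)) ⟨i, hi, hpos⟩
    linarith
  -- construct bounded functionals
  have hfun : ∀ s : ℕ → ℝ, (∀ n, |s n| ≤ 1) →
      ∃ F : X →L[ℝ] ℝ, ‖F‖ ≤ 1 ∧ ∀ n, F (x n) = s n * (1 - ε n) := by
    intro s hs
    set S := Submodule.span ℝ (Set.range x) with hS
    let b : Module.Basis ℕ ℝ S := Module.Basis.span hli
    let g : S →ₗ[ℝ] ℝ := Module.Basis.constr b ℝ (fun i => s i * (1 - ε i))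
    have hgb : ∀ v : S, |g v| ≤ ‖v‖ := by
      intro v
      have hga : g v = (b.repr v).sum fun i a => a • (s i * (1 - ε i)) := Module.Basis.constr_apply b ℝ _ v
      rw [hga, Finsupp.sum]
      set c := b.repr v with hc
      have hv : (v : X) = ∑ i ∈ c.support, c i • x i := by
        have hv2 : v = ∑ i ∈ c.support, c i • b i := by
          conv_lhs => rw [← b.linearCombination_repr v]
          rw [Finsupp.linearCombination_apply, Finsupp.sum]
        rw [hv2]
        push_cast
        refine Finset.sum_congr rfl fun i _ => ?_
        rw [show ((b i : X)) = x i from congrArg Subtype.val (Module.Basis.span_apply hli i)]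
      calc |∑ i ∈ c.support, c i • (s i * (1 - ε i))|
          ≤ ∑ i ∈ c.support, |c i • (s i * (1 - ε i))| := Finset.abs_sum_le_sum_abs _ _
        _ ≤ ∑ i ∈ c.support, (1 - ε i) * |c i| := by
            refine Finset.sum_le_sum fun i _ => ?_
            rw [smul_eq_mul, abs_mul, abs_mul, abs_of_nonneg (le_of_lt (hεlt i))]
            have h3 : |s i| * (1 - ε i) ≤ 1 - ε i := by nlinarith [hs i, (hεlt i).le]
            calc |c i| * (|s i| * (1 - ε i)) ≤ |c i| * (1 - ε i) :=
                  mul_le_mul_of_nonneg_left h3 (abs_nonneg _)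
              _ = (1 - ε i) * |c i| := mul_comm _ _
        _ ≤ ‖∑ i ∈ c.support, c i • x i‖ := key c
        _ = ‖(v : X)‖ := by rw [hv]
    let gc : S →L[ℝ] ℝ := LinearMap.mkContinuous g 1 (fun v => by
      rw [Real.norm_eq_abs, one_mul]; exact hgb v)
    obtain ⟨F, hFe, hFn⟩ := exists_extension_norm_eq S gc
    refine ⟨F, ?_, ?_⟩
    · rw [hFn]; exact LinearMap.mkContinuous_norm_le g zero_le_one _
    · intro n
      have hxm : x n ∈ S := Submodule.subset_span ⟨n, rfl⟩
      have hb : (⟨x n, hxm⟩ : S) = b n := (Module.Basis.span_apply hli n).symm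
      have h1 : F (x n) = gc (⟨x n, hxm⟩ : S) := hFe ⟨x n, hxm⟩
      rw [h1, hb]
      show g (b n) = s n * (1 - ε n)
      exact Module.Basis.constr_basis b ℝ _ n
  obtain ⟨G, hGn, hGx⟩ := hfun (fun _ => 1) (by simp)
  obtain ⟨F, hFn, hFx⟩ := hfun (fun n => (-1) ^ n) (by intro n; simp)
  -- norm lower bound for x k
  have hxlb : ∀ k, 1 - ε k ≤ ‖x k‖ := by
    intro k
    have hb := (hbd (k + 1) (fun i => if i = k then 1 else 0)).1
    have e1 : ∀ i, (1 - ε i) * |(if i = k then (1 : ℝ) else 0)| =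
        if i = k then 1 - ε k else 0 := by
      intro i; split <;> simp_all
    have e2 : ∀ i, (if i = k then (1 : ℝ) else 0) • x i = if i = k then x k else 0 := by
      intro i; split <;> simp_all
    rw [Finset.sum_congr rfl (fun i _ => e1 i), Finset.sum_congr rfl (fun i _ => e2 i),
      Finset.sum_ite_eq' _ k, Finset.sum_ite_eq' _ k] at hb
    simpa [Finset.self_mem_range_succ] using hb
  have hxpos : ∀ k, 0 < ‖x k‖ := fun k => lt_of_lt_of_le (hεlt k) (hxlb k)
  -- value bounds
  have hval : ∀ k, 1 - ε k ≤ ‖x k‖⁻¹ * (1 - ε k) ∧ ‖x k‖⁻¹ * (1 - ε k) ≤ 1 := by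
    intro k
    have h1 : ‖x k‖ * ‖x k‖⁻¹ = 1 := mul_inv_cancel₀ (ne_of_gt (hxpos k))
    have h2 : (0:ℝ) < ‖x k‖⁻¹ := inv_pos.mpr (hxpos k)
    constructor
    · nlinarith [hx1 k, hεlt k, mul_le_mul_of_nonneg_left (hx1 k) h2.le]
    · nlinarith [hεlt k, mul_le_mul_of_nonneg_left (hxlb k) h2.le]
  set yn : ℕ → X := fun n => ‖x (2 * n)‖⁻¹ • x (2 * n) with hyn
  set zn : ℕ → X := fun n => ‖x (2 * n + 1)‖⁻¹ • x (2 * n + 1) with hzn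
  have hyn1 : ∀ n, ‖yn n‖ = 1 := by
    intro n
    rw [hyn]
    simp only [norm_smul, norm_inv, norm_norm]
    exact inv_mul_cancel₀ (ne_of_gt (hxpos _))
  have hzn1 : ∀ n, ‖zn n‖ = 1 := by
    intro n
    rw [hzn]
    simp only [norm_smul, norm_inv, norm_norm]
    exact inv_mul_cancel₀ (ne_of_gt (hxpos _))
  -- tendsto of subsequences of ε
  have h2n : Tendsto (fun n => ε (2 * n)) atTop (𝓝 0) :=
    hε0.comp (tendsto_atTop_atTop.mpr fun b => ⟨b, fun a ha => by omega⟩)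
  have h2n1 : Tendsto (fun n => ε (2 * n + 1)) atTop (𝓝 0) :=
    hε0.comp (tendsto_atTop_atTop.mpr fun b => ⟨b, fun a ha => by omega⟩)
  -- ‖F‖ = 1
  have hF1 : ‖F‖ = 1 := by
    refine le_antisymm hFn ?_
    have hub : ∀ n, 1 - ε n ≤ ‖F‖ := by
      intro n
      have h1 : |F (x n)| ≤ ‖F‖ * ‖x n‖ := by
        rw [← Real.norm_eq_abs]; exact F.le_opNorm _
      have h2 : |F (x n)| = 1 - ε n := by
        rw [hFx, abs_mul, abs_pow, abs_neg, abs_one, one_pow, one_mul,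
          abs_of_nonneg (le_of_lt (hεlt n))]
      nlinarith [norm_nonneg F, hx1 n]
    have ht : Tendsto (fun n => 1 - ε n) atTop (𝓝 (1 - 0)) :=
      Tendsto.sub tendsto_const_nhds hε0
    rw [show (1:ℝ) - 0 = 1 by norm_num] at ht
    exact le_of_tendsto ht (Eventually.of_forall hub)
  -- F values
  have hFy : ∀ n, F (yn n) = ‖x (2 * n)‖⁻¹ * (1 - ε (2 * n)) := by
    intro n
    rw [hyn]
    simp only [map_smul, smul_eq_mul, hFx]
    rw [Even.neg_one_pow (even_two_mul n), one_mul]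
  have hFz : ∀ n, F (zn n) = -(‖x (2 * n + 1)‖⁻¹ * (1 - ε (2 * n + 1))) := by
    intro n
    rw [hzn]
    simp only [map_smul, smul_eq_mul, hFx]
    rw [Odd.neg_one_pow ⟨n, by ring⟩]
    ring
  have hGy : ∀ n, G (yn n) = ‖x (2 * n)‖⁻¹ * (1 - ε (2 * n)) := by
    intro n; rw [hyn]; simp only [map_smul, smul_eq_mul, hGx, one_mul]
  have hGz : ∀ n, G (zn n) = ‖x (2 * n + 1)‖⁻¹ * (1 - ε (2 * n + 1)) := by
    intro n; rw [hzn]; simp only [map_smul, smul_eq_mul, hGx, one_mul]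
  -- norm of sum tends to 2
  have hnorm2 : Tendsto (fun n => ‖yn n + zn n‖) atTop (𝓝 2) := by
    have hlow : ∀ n, (1 - ε (2 * n)) + (1 - ε (2 * n + 1)) ≤ ‖yn n + zn n‖ := by
      intro n
      have hG : G (yn n + zn n) ≤ ‖yn n + zn n‖ := by
        have := (G.le_opNorm (yn n + zn n))
        have habs : |G (yn n + zn n)| ≤ ‖G‖ * ‖yn n + zn n‖ := by
          rw [← Real.norm_eq_abs]; exact G.le_opNorm _
        nlinarith [le_abs_self (G (yn n + zn n)), norm_nonneg (yn n + zn n)]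
      have : G (yn n + zn n) = G (yn n) + G (zn n) := map_add G _ _
      rw [this, hGy, hGz] at hG
      have v1 := (hval (2 * n)).1
      have v2 := (hval (2 * n + 1)).1
      linarith
    have hhigh : ∀ n, ‖yn n + zn n‖ ≤ 2 := by
      intro n
      calc ‖yn n + zn n‖ ≤ ‖yn n‖ + ‖zn n‖ := norm_add_le _ _
        _ = 2 := by rw [hyn1, hzn1]; norm_num
    have ht : Tendsto (fun n => (1 - ε (2 * n)) + (1 - ε (2 * n + 1))) atTop
        (𝓝 (1 - 0 + (1 - 0))) :=
      (Tendsto.sub tendsto_const_nhds h2n).add (Tendsto.sub tendsto_const_nhds h2n1)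
    rw [show (1:ℝ) - 0 + (1 - 0) = 2 by norm_num] at ht
    exact tendsto_of_tendsto_of_tendsto_of_le_of_le ht tendsto_const_nhds hlow hhigh
  -- F (yn n) → 1
  have hFyt : Tendsto (fun n => F (yn n)) atTop (𝓝 1) := by
    have hl : ∀ n, 1 - ε (2 * n) ≤ F (yn n) := fun n => by
      rw [hFy]; exact (hval (2 * n)).1
    have hu : ∀ n, F (yn n) ≤ 1 := fun n => by
      rw [hFy]; exact (hval (2 * n)).2
    have ht : Tendsto (fun n => 1 - ε (2 * n)) atTop (𝓝 (1 - 0)) :=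
      Tendsto.sub tendsto_const_nhds h2n
    rw [show (1:ℝ) - 0 = 1 by norm_num] at ht
    exact tendsto_of_tendsto_of_tendsto_of_le_of_le ht tendsto_const_nhds hl hu
  -- F (zn n) → -1
  have hFzt : Tendsto (fun n => F (zn n)) atTop (𝓝 (-1)) := by
    have : Tendsto (fun n => ‖x (2 * n + 1)‖⁻¹ * (1 - ε (2 * n + 1))) atTop (𝓝 1) := by
      have ht : Tendsto (fun n => 1 - ε (2 * n + 1)) atTop (𝓝 (1 - 0)) :=
        Tendsto.sub tendsto_const_nhds h2n1
      rw [show (1:ℝ) - 0 = 1 by norm_num] at ht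
      exact tendsto_of_tendsto_of_tendsto_of_le_of_le ht tendsto_const_nhds
        (fun n => (hval (2 * n + 1)).1) (fun n => (hval (2 * n + 1)).2)
    have := this.neg
    simp only [← hFz] at this
    simpa using this
  have := h yn zn F hyn1 hzn1 hF1 hnorm2 hFyt
  have h11 := tendsto_nhds_unique this hFzt
  linarith

theorem wuacs_no_asymp_isometric_l1 (X : Type*) [NormedAddCommGroup X] [NormedSpace ℝ X]
    [CompleteSpace X] (h : IsWuacs X) : ¬ ContainsAsympIsomL1 X := by
  exact aux_wuacs_no_aiL1 X h
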